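/- arXiv:math/0402025 — 5 statements merged into one kernel-verified Lean document; each statement's English description precedes it below -/
import Mathlib

section
/- Let t : ℕ → ℝ satisfy t(0) = 0, t(a+b) ≤ t(a) + t(b) + 1 for all a, b ≥ 1, and let c = t(1). Suppose there exists n ≥ 1 with t(n) ≤ n·c + (n-1) - 1. Then for every m = pn + l with p ≥ 1 and 0 ≤ l < n, we have t(m) ≤ m·c + (m-1) - p. -/
theorem stmt_3 (t : ℕ → ℝ) (h0 : t 0 = 0)
    (hsub : ∀ a b : ℕ, 1 ≤ a → 1 ≤ b → t (a + b) ≤ t a + t b + 1)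
    (c : ℝ) (hc : c = t 1)
    (n : ℕ) (hn : 1 ≤ n) (hdrop : t n ≤ n * c + (n - 1) - 1) :
    ∀ p l : ℕ, 1 ≤ p → l < n →
      t (p * n + l) ≤ (p * n + l : ℕ) * c + ((p * n + l : ℕ) - 1 : ℝ) - p := by
  have aux : ∀ k : ℕ, 1 ≤ k → t k ≤ k * c + ((k : ℝ) - 1) := by
    intro k
    induction k with
    | zero => intro h; omega
    | succ k ih =>
      intro _
      rcases Nat.eq_zero_or_pos k with hk | hk
      · subst hk; simp [hc]
      · have h1 := hsub k 1 hk le_rfl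
        have h2 := ih hk
        push_cast
        push_cast at h2
        rw [hc] at h2 ⊢
        linarith
  intro p l hp hl
  induction p, hp using Nat.le_induction with
  | base =>
    rcases Nat.eq_zero_or_pos l with hl0 | hl0
    · subst hl0
      simpa using hdrop
    · have h1 := hsub n l hn hl0
      have h2 := aux l hl0
      rw [Nat.one_mul]
      push_cast
      linarith
  | succ p hp ih =>
    have hpn : 1 ≤ p * n + l := by nlinarith
    have h1 := hsub n (p * n + l) hn hpn
    have heq : (p + 1) * n + l = n + (p * n + l) := by ring
    rw [heq]
    push_cast at ih ⊢
    linarith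
end

section
/- Let t : ℕ → ℝ satisfy t(0) = 0, t(a+b) ≤ t(a) + t(b) + 1 for all a, b ≥ 1, and let c = t(1). Suppose there exists n ≥ 1 with t(n) ≤ n·c + n - 2. Then limsup_{m→∞} (t(m) - m·c)/(m-1) ≤ (n-1)/n. -/
theorem stmt_4 (t : ℕ → ℝ) (h0 : t 0 = 0)
    (hsub : ∀ a b : ℕ, 1 ≤ a → 1 ≤ b → t (a + b) ≤ t a + t b + 1)
    (c : ℝ) (hc : c = t 1)
    (n : ℕ) (hn : 1 ≤ n) (hdrop : t n ≤ n * c + n - 2) :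
    Filter.limsup (fun m : ℕ => (t m - m * c) / (m - 1)) Filter.atTop ≤ ((n : ℝ) - 1) / n := by
  have hN1 : (1:ℝ) ≤ (n:ℝ) := by exact_mod_cast hn
  have hN0 : (0:ℝ) < (n:ℝ) := by linarith
  -- t r ≤ r*c + (r-1) for r ≥ 1
  have lem2 : ∀ r : ℕ, 1 ≤ r → t r ≤ r * c + ((r:ℝ) - 1) := by
    intro r hr
    induction r with
    | zero => omega
    | succ k ih =>
      rcases Nat.eq_zero_or_pos k with hk | hk
      · subst hk; simp [hc]
      · have h1 := hsub k 1 hk le_rfl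
        have h2 := ih hk
        push_cast
        push_cast at h2
        rw [hc] at *
        linarith
  -- t (q*n + (s+1)) ≤ q * t n + t (s+1) + q
  have lem1 : ∀ q s : ℕ, t (q * n + (s + 1)) ≤ q * t n + t (s + 1) + q := by
    intro q s
    induction q with
    | zero => simp
    | succ p ih =>
      have h1 : (p + 1) * n + (s + 1) = n + (p * n + (s + 1)) := by ring
      have h2 := hsub n (p * n + (s + 1)) hn (by omega)
      rw [h1]
      push_cast
      linarith
  -- eventual bound
  have key : ∀ ε : ℝ, 0 < ε → ∀ᶠ m : ℕ in Filter.atTop,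
      (t m - m * c) / ((m:ℝ) - 1) ≤ ((n:ℝ) - 1) / n + ε := by
    intro ε hε
    filter_upwards [Filter.eventually_ge_atTop (max (n + 1) (⌈((n:ℝ) - 1)/ε⌉₊ + 2))] with m hm
    have hmn : n + 1 ≤ m := le_trans (le_max_left _ _) hm
    have hm2 : (⌈((n:ℝ) - 1)/ε⌉₊ + 2) ≤ m := le_trans (le_max_right _ _) hm
    have hm1R : (1:ℝ) ≤ (m:ℝ) - 1 := by
      have : (2:ℕ) ≤ m := by omega
      have : (2:ℝ) ≤ (m:ℝ) := by exact_mod_cast this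
      linarith
    have hm1pos : (0:ℝ) < (m:ℝ) - 1 := by linarith
    -- ε bound: (n-1)/(m-1) ≤ ε, i.e. n-1 ≤ ε*(m-1)
    have hεm : (n:ℝ) - 1 ≤ ε * ((m:ℝ) - 1) := by
      have h1 : ((n:ℝ) - 1)/ε ≤ (⌈((n:ℝ) - 1)/ε⌉₊ : ℝ) := Nat.le_ceil _
      have h2 : ((⌈((n:ℝ) - 1)/ε⌉₊ : ℝ) + 1) ≤ (m:ℝ) - 1 := by
        have : (⌈((n:ℝ) - 1)/ε⌉₊ + 2 : ℝ) ≤ (m:ℝ) := by exact_mod_cast Nat.cast_le.mpr hm2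
        linarith
      have h3 : ((n:ℝ) - 1)/ε ≤ (m:ℝ) - 1 := le_trans h1 (by linarith)
      have h4 := (div_le_iff₀ hε).mp h3
      linarith
    -- decompose m
    set q := (m - 1) / n with hq
    set s := (m - 1) % n with hs
    have hdm : m = q * n + (s + 1) := by
      have h := Nat.div_add_mod (m - 1) n
      rw [← hq, ← hs, Nat.mul_comm] at h
      omega
    have hsn : s + 1 ≤ n := Nat.mod_lt _ (by omega)
    -- numerator bound
    have h1 := lem1 q s
    have h2 := lem2 (s + 1) (by omega)
    have hQ0 : (0:ℝ) ≤ (q:ℝ) := Nat.cast_nonneg _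
    have hR1 : (1:ℝ) ≤ ((s:ℝ) + 1) := by have : (0:ℝ) ≤ (s:ℝ) := Nat.cast_nonneg s; linarith
    have hRN : ((s:ℝ) + 1) ≤ (n:ℝ) := by exact_mod_cast hsn
    have hmR : (m:ℝ) = (q:ℝ) * n + ((s:ℝ) + 1) := by exact_mod_cast hdm
    have hnum : t m - m * c ≤ ((q:ℝ) + 1) * ((n:ℝ) - 1) := by
      rw [hdm]
      push_cast at h1 h2 ⊢
      have hd' : (q:ℝ) * t n ≤ (q:ℝ) * ((n:ℝ) * c + (n:ℝ) - 2) :=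
        mul_le_mul_of_nonneg_left hdrop hQ0
      have hm' : ((q * n + (s + 1) : ℕ) : ℝ) = (q:ℝ) * n + ((s:ℝ) + 1) := by push_cast; ring
      nlinarith [h1, h2, hd']
    have hQN : (q:ℝ) * (n:ℝ) ≤ (m:ℝ) - 1 := by
      rw [hmR]; linarith
    -- divide
    rw [div_le_iff₀ hm1pos]
    have hD0 : 0 ≤ ((n:ℝ) - 1) / (n:ℝ) := by apply div_nonneg <;> linarith
    have hDN : ((n:ℝ) - 1) / (n:ℝ) * (n:ℝ) = (n:ℝ) - 1 := by field_simp
    generalize hg : ((n:ℝ) - 1) / (n:ℝ) = D at hD0 hDN ⊢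
    have hkey1 : D * ((q:ℝ) * (n:ℝ)) ≤ D * ((m:ℝ) - 1) :=
      mul_le_mul_of_nonneg_left hQN hD0
    nlinarith [hnum, hkey1, hεm, hDN, mul_le_mul_of_nonneg_left hDN.le hQ0,
      mul_le_mul_of_nonneg_left hDN.ge hQ0]
  -- conclude with limsup
  rw [Filter.limsup_eq]
  by_cases hB : BddBelow {a : ℝ | ∀ᶠ m : ℕ in Filter.atTop, (t m - m * c) / ((m:ℝ) - 1) ≤ a}
  · apply le_of_forall_pos_le_add
    intro ε hε
    exact csInf_le hB (key ε hε)
  · rw [Real.sInf_of_not_bddBelow hB]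
    apply div_nonneg <;> linarith
end

section
/- Let t : ℕ → ℝ satisfy t(0) = 0, t(a+b) ≤ t(a) + t(b) + 1 for all a, b ≥ 1, and let c = t(1). Suppose there exists n ≥ 1 such that t(n+q) ≤ t(n) + t(q) for every q ≥ 1. Then for every m = pn + l with p ≥ 1 and 0 ≤ l < n, we have t(m) ≤ m·c + m - p. -/
theorem stmt_5 (t : ℕ → ℝ) (h0 : t 0 = 0)
    (hsub : ∀ a b : ℕ, 1 ≤ a → 1 ≤ b → t (a + b) ≤ t a + t b + 1)
    (c : ℝ) (hc : c = t 1)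
    (n : ℕ) (hn : 1 ≤ n) (himp : ∀ q : ℕ, 1 ≤ q → t (n + q) ≤ t n + t q) :
    ∀ p l : ℕ, 1 ≤ p → l < n →
      t (p * n + l) ≤ (p * n + l : ℕ) * c + (p * n + l : ℕ) - p := by
  have triv : ∀ k : ℕ, 1 ≤ k → t k ≤ (k : ℝ) * c + (k : ℝ) - 1 := by
    intro k hk
    induction k, hk using Nat.le_induction with
    | base => simp [hc]
    | succ k hk ih =>
      have := hsub k 1 hk le_rfl
      push_cast
      calc t (k + 1) ≤ t k + t 1 + 1 := this
        _ ≤ ((k : ℝ) * c + k - 1) + c + 1 := by rw [← hc]; linarith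
        _ = ((k : ℝ) + 1) * c + ((k : ℝ) + 1) - 1 := by ring
  intro p l hp hl
  induction p, hp using Nat.le_induction with
  | base =>
    rcases Nat.eq_zero_or_pos l with rfl | hl1
    · simpa using triv n hn
    · have h1 := himp l hl1
      have h2 := triv n hn
      have h3 := triv l hl1
      have : (1 * n + l : ℕ) = n + l := by ring
      rw [this]
      push_cast
      calc t (n + l) ≤ t n + t l := h1
        _ ≤ _ := by linarith
  | succ p hp ih =>
    have hq : 1 ≤ p * n + l := le_trans hn (by nlinarith)
    have h1 := himp (p * n + l) hq
    have h2 := triv n hn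
    have : ((p + 1) * n + l : ℕ) = n + (p * n + l) := by ring
    rw [this]
    push_cast
    push_cast at ih
    calc t (n + (p * n + l)) ≤ t n + t (p * n + l) := h1
      _ ≤ _ := by linarith
end

section
/- Let t : ℕ → ℝ satisfy t(0) = 0, t(a+b) ≤ t(a) + t(b) + 1 for all a, b ≥ 1, and let c = t(1). Suppose there exists n ≥ 1 such that t(n+q) ≤ t(n) + t(q) for every q ≥ 1. Then limsup_{m→∞} (t(m) - m·c)/(m-1) ≤ (n-1)/n. -/
/-!
Write `d m = t m - m * t 1`. Splitting off `1` repeatedly in the subadditivity relation gives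
`d j ≤ j - 1`, while peeling off copies of `n` exactly (no `+ 1` defect) gives
`t (k * n + r) ≤ k * t n + t r`. Writing `m = k * n + r` with `1 ≤ r ≤ n`, the defect of `t m` is
thus only `k (n - 1) + (r - 1) ≤ (n - 1) / n * (m - 1) + 1`, so the quotients
`d m / (m - 1)` are eventually below a sequence converging to `(n - 1) / n`.
-/

open Filter Topology

section GrowthRate

variable {t : ℕ → ℝ}

theorem sub_mul_le_of_add_one_le (hsub : ∀ a, 1 ≤ a → t (a + 1) ≤ t a + t 1 + 1)
    {j : ℕ} (hj : 1 ≤ j) : t j - j * t 1 ≤ j - 1 := by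
  induction j, hj using Nat.le_induction with
  | base => simp
  | succ j hj ih =>
    push_cast
    linarith [hsub j hj]

theorem le_mul_add_of_add_le {n : ℕ} (himp : ∀ q, 1 ≤ q → t (n + q) ≤ t n + t q)
    (k : ℕ) {q : ℕ} (hq : 1 ≤ q) : t (k * n + q) ≤ k * t n + t q := by
  induction k with
  | zero => simp
  | succ k ih =>
    have hsplit : (k + 1) * n + q = n + (k * n + q) := by ring
    rw [hsplit]
    push_cast
    linarith [himp (k * n + q) (by omega)]

theorem Nat.exists_eq_mul_add_of_one_le {m n : ℕ} (hm : 1 ≤ m) (hn : 1 ≤ n) :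
    ∃ k r, m = k * n + r ∧ 1 ≤ r ∧ r ≤ n := by
  refine ⟨(m - 1) / n, (m - 1) % n + 1, ?_, by omega, Nat.mod_lt _ hn⟩
  have := Nat.div_add_mod' (m - 1) n
  omega

theorem sub_mul_le_of_add_le (hsub : ∀ a b, 1 ≤ a → 1 ≤ b → t (a + b) ≤ t a + t b + 1)
    {n : ℕ} (hn : 1 ≤ n) (himp : ∀ q, 1 ≤ q → t (n + q) ≤ t n + t q)
    {m : ℕ} (hm : 1 ≤ m) : t m - m * t 1 ≤ ((n : ℝ) - 1) / n * (m - 1) + 1 := by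
  have hsub1 : ∀ a, 1 ≤ a → t (a + 1) ≤ t a + t 1 + 1 := fun a ha => hsub a 1 ha le_rfl
  obtain ⟨k, r, rfl, hr1, hrn⟩ := Nat.exists_eq_mul_add_of_one_le hm hn
  have hdefect : t (k * n + r) - ↑(k * n + r) * t 1 ≤ k * ((n : ℝ) - 1) + (r - 1) := by
    have hk : (k : ℝ) * (t n - n * t 1) ≤ k * ((n : ℝ) - 1) :=
      mul_le_mul_of_nonneg_left (sub_mul_le_of_add_one_le hsub1 hn) k.cast_nonneg
    push_cast
    linarith [le_mul_add_of_add_le himp k hr1, sub_mul_le_of_add_one_le hsub1 hr1]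
  have hn0 : (0 : ℝ) < n := by exact_mod_cast hn
  have hrn' : (r : ℝ) ≤ n := by exact_mod_cast hrn
  have hr1' : (1 : ℝ) ≤ r := by exact_mod_cast hr1
  refine hdefect.trans ?_
  rw [← sub_nonneg]
  have hform : ((n : ℝ) - 1) / n * (↑(k * n + r) - 1) + 1 - (k * ((n : ℝ) - 1) + (r - 1)) =
      (n + 1 - r) / n := by
    push_cast
    field_simp
    ring
  rw [hform]
  exact div_nonneg (by linarith) hn0.le

theorem Real.limsup_le_of_eventuallyLE_of_tendsto {ι : Type*} {l : Filter ι} [l.NeBot]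
    {u v : ι → ℝ} {L : ℝ} (hL : 0 ≤ L) (huv : u ≤ᶠ[l] v) (hv : Tendsto v l (𝓝 L)) :
    limsup u l ≤ L := by
  by_cases hcob : IsCoboundedUnder (· ≤ ·) l u
  · exact (limsup_le_limsup huv hcob hv.isBoundedUnder_le).trans_eq hv.limsup_eq
  · rwa [Real.limsup_of_not_isCoboundedUnder hcob]

theorem tendsto_const_add_one_div_sub_one (L : ℝ) :
    Tendsto (fun m : ℕ => L + 1 / ((m : ℝ) - 1)) atTop (𝓝 L) := by
  have hsub : Tendsto (fun m : ℕ => (m : ℝ) - 1) atTop atTop :=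
    tendsto_atTop_add_const_right _ (-1) tendsto_natCast_atTop_atTop
  simpa using tendsto_const_nhds.add (tendsto_inv_atTop_zero.comp hsub)

end GrowthRate

theorem stmt_6_general (t : ℕ → ℝ)
    (hsub : ∀ a b : ℕ, 1 ≤ a → 1 ≤ b → t (a + b) ≤ t a + t b + 1)
    (c : ℝ) (hc : c = t 1)
    (n : ℕ) (hn : 1 ≤ n) (himp : ∀ q : ℕ, 1 ≤ q → t (n + q) ≤ t n + t q) :
    Filter.limsup (fun m : ℕ => (t m - m * c) / (m - 1)) Filter.atTop ≤ ((n : ℝ) - 1) / n := by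
  subst hc
  have hL : (0 : ℝ) ≤ ((n : ℝ) - 1) / n := by
    have : (1 : ℝ) ≤ n := by exact_mod_cast hn
    exact div_nonneg (by linarith) (by linarith)
  refine Real.limsup_le_of_eventuallyLE_of_tendsto hL ?_ (tendsto_const_add_one_div_sub_one _)
  filter_upwards [eventually_ge_atTop 2] with m hm
  have hm1 : (0 : ℝ) < m - 1 := by
    have : (2 : ℝ) ≤ m := by exact_mod_cast hm
    linarith
  rw [div_le_iff₀ hm1, add_mul, one_div_mul_cancel hm1.ne']
  exact sub_mul_le_of_add_le hsub hn himp (by omega)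

theorem stmt_6 (t : ℕ → ℝ) (h0 : t 0 = 0)
    (hsub : ∀ a b : ℕ, 1 ≤ a → 1 ≤ b → t (a + b) ≤ t a + t b + 1)
    (c : ℝ) (hc : c = t 1)
    (n : ℕ) (hn : 1 ≤ n) (himp : ∀ q : ℕ, 1 ≤ q → t (n + q) ≤ t n + t q) :
    Filter.limsup (fun m : ℕ => (t m - m * c) / (m - 1)) Filter.atTop ≤ ((n : ℝ) - 1) / n :=
  stmt_6_general t hsub c hc n hn himp
end

section
/- Let t : ℕ → ℤ satisfy t(0) = 0, t(a+b) ≤ t(a) + t(b) + 1 for all a, b ≥ 1, and c = t(1) ≥ 0. Let n ≥ 2 be fixed, and suppose that either t(n) ≤ n·c + n - 2 or t(n+q) ≤ t(n) + t(q) for all q ≥ 1. Then limsup_{m→∞} (t(m) - m·c)/(m-1) ≤ (n-1)/n. -/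
theorem stmt_16 (t : ℕ → ℤ) (h0 : t 0 = 0)
    (hsub : ∀ a b : ℕ, 1 ≤ a → 1 ≤ b → t (a + b) ≤ t a + t b + 1)
    (c : ℤ) (hc : c = t 1) (hc0 : 0 ≤ c)
    (n : ℕ) (hn : 2 ≤ n)
    (hdich : t n ≤ n * c + n - 2 ∨ ∀ q : ℕ, 1 ≤ q → t (n + q) ≤ t n + t q) :
    Filter.limsup
        (fun m : ℕ => ((t m : ℝ) - (m : ℝ) * (c : ℝ)) / ((m : ℝ) - 1)) Filter.atTop
      ≤ ((n : ℝ) - 1) / n := by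
  have h1 : t 1 = c := hc.symm
  have L0 : ∀ m : ℕ, 1 ≤ m → t m ≤ m * c + m - 1 := by
    intro m hm
    induction m, hm using Nat.le_induction with
    | base => simp [h1]
    | succ m hm ih =>
      have h := hsub m 1 hm le_rfl
      push_cast
      push_cast at ih
      linarith
  have H : ∀ m : ℕ, 1 ≤ m → (n:ℤ) * (t m - m * c) ≤ ((n:ℤ) - 1) * ((m:ℤ) - 1) + n := by
    have hn' : (2:ℤ) ≤ (n:ℤ) := by exact_mod_cast hn
    rcases hdich with hd | hd
    · -- case 1
      have L1 : ∀ k : ℕ, 1 ≤ k → t (n * k) ≤ (n:ℤ)*k*c + n*k - k - 1 := by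
        intro k hk
        induction k, hk using Nat.le_induction with
        | base =>
          simp only [mul_one, Nat.cast_one]
          linarith
        | succ k hk ih =>
          have hkn : 1 ≤ n * k := Nat.mul_pos (by omega) hk
          have h := hsub (n*k) n hkn (by omega)
          have e : n * (k+1) = n*k + n := by ring
          rw [e]
          push_cast
          linarith
      intro m hm
      by_cases hmn : m < n
      · have h := L0 m hm
        have hm' : (m:ℤ) ≤ (n:ℤ) := by exact_mod_cast hmn.le
        have hm1 : (1:ℤ) ≤ (m:ℤ) := by exact_mod_cast hm
        nlinarith
      · push_neg at hmn
        obtain ⟨k, r, hk1, hrn, hmod⟩ : ∃ k r : ℕ, 1 ≤ k ∧ r < n ∧ n * k + r = m :=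
          ⟨m / n, m % n, (Nat.one_le_div_iff (by omega)).mpr hmn,
            Nat.mod_lt m (by omega), Nat.div_add_mod m n⟩
        have hL1 := L1 k hk1
        have hmZ : (m:ℤ) = (n:ℤ)*k + r := by exact_mod_cast hmod.symm
        have key : t m ≤ ((n:ℤ)*k + r)*c + ((n:ℤ)*k + (r:ℤ)) - 1 - k := by
          rcases Nat.eq_zero_or_pos r with hr0 | hrpos
          · have h3' : t m = t (n*k) := congrArg t (by omega)
            have hr0' : (r:ℤ) = 0 := by exact_mod_cast hr0
            rw [h3', hr0']
            linarith
          · have h2 := L0 r hrpos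
            have h3' : t m ≤ t (n*k) + t r + 1 := by
              rw [← hmod]
              exact hsub (n*k) r (Nat.mul_pos (by omega) hk1) hrpos
            linarith
        have hr' : (r:ℤ) ≤ (n:ℤ) - 1 := by
          have : (r:ℤ) < (n:ℤ) := by exact_mod_cast hrn
          linarith
        have hk0 : (0:ℤ) ≤ (k:ℤ) := Int.natCast_nonneg _
        have key2 := mul_le_mul_of_nonneg_left key (by linarith : (0:ℤ) ≤ (n:ℤ))
        rw [hmZ]
        nlinarith [key2, hr', hk0]
    · -- case 2
      have L2 : ∀ k r : ℕ, 1 ≤ r → t (n * k + r) ≤ (k:ℤ) * t n + t r := by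
        intro k
        induction k with
        | zero => intro r hr; simp
        | succ k ih =>
          intro r hr
          have e : n * (k+1) + r = n + (n*k + r) := by ring
          have hq : 1 ≤ n*k + r := by omega
          have h := hd (n*k + r) hq
          rw [e]
          have h2 := ih r hr
          push_cast
          linarith
      intro m hm
      obtain ⟨k, s, hsn, hmeq⟩ : ∃ k s : ℕ, s < n ∧ m = n * k + (s + 1) :=
        ⟨(m-1)/n, (m-1)%n, Nat.mod_lt (m-1) (by omega), by
          have := Nat.div_add_mod (m-1) n; omega⟩
      have hA := L2 k (s+1) (by omega)
      rw [← hmeq] at hA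
      have hB := L0 (s+1) (by omega)
      have hC := L0 n (by omega)
      have hCk : (k:ℤ) * t n ≤ (k:ℤ) * ((n:ℤ)*c + n - 1) :=
        mul_le_mul_of_nonneg_left hC (Int.natCast_nonneg _)
      have hmZ : (m:ℤ) = (n:ℤ)*k + s + 1 := by exact_mod_cast congrArg (Nat.cast : ℕ → ℤ) hmeq
      have hmcc : (m:ℤ) * c = ((n:ℤ)*k + s + 1) * c := by rw [hmZ]
      have e1 : t m - (m:ℤ) * c ≤ (k:ℤ)*((n:ℤ)-1) + s := by
        push_cast at hA hB
        linarith
      have hs' : (s:ℤ) ≤ (n:ℤ) - 1 := by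
        have : (s:ℤ) < (n:ℤ) := by exact_mod_cast hsn
        linarith
      have e2 := mul_le_mul_of_nonneg_left e1 (by linarith : (0:ℤ) ≤ (n:ℤ))
      rw [hmZ] at e2 ⊢
      nlinarith [e2, hs']
  -- analytic part
  have hn2 : (2:ℝ) ≤ (n:ℝ) := by exact_mod_cast hn
  have hnpos : (0:ℝ) < (n:ℝ) := by linarith
  set u : ℕ → ℝ := fun m : ℕ => ((t m : ℝ) - (m : ℝ) * (c : ℝ)) / ((m : ℝ) - 1) with hu
  rw [Filter.limsup_eq]
  by_cases hbd : BddBelow {a : ℝ | ∀ᶠ m in Filter.atTop, u m ≤ a}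
  · refine le_of_forall_pos_le_add fun ε hε => csInf_le hbd ?_
    simp only [Set.mem_setOf_eq]
    rw [Filter.eventually_atTop]
    refine ⟨max 2 (⌈1/ε⌉₊ + 1), fun m hm => ?_⟩
    have hm2 : 2 ≤ m := le_trans (le_max_left _ _) hm
    have hmceil : ⌈1/ε⌉₊ + 1 ≤ m := le_trans (le_max_right _ _) hm
    have hmR : (2:ℝ) ≤ (m:ℝ) := by exact_mod_cast hm2
    have hm1pos : (0:ℝ) < (m:ℝ) - 1 := by linarith
    have hεm : 1 ≤ ε * ((m:ℝ) - 1) := by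
      have h1' : (1/ε : ℝ) ≤ ⌈1/ε⌉₊ := Nat.le_ceil _
      have h2' : ((⌈1/ε⌉₊ : ℕ):ℝ) ≤ (m:ℝ) - 1 := by
        have : ((⌈1/ε⌉₊ + 1 : ℕ):ℝ) ≤ (m:ℝ) := by exact_mod_cast hmceil
        push_cast at this
        linarith
      have h3' : (1/ε : ℝ) ≤ (m:ℝ) - 1 := le_trans h1' h2'
      calc (1:ℝ) = ε * (1/ε) := by field_simp
        _ ≤ ε * ((m:ℝ)-1) := mul_le_mul_of_nonneg_left h3' hε.le
    have HR : (n:ℝ) * ((t m : ℝ) - (m:ℝ)*(c:ℝ)) ≤ ((n:ℝ)-1)*((m:ℝ)-1) + n := by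
      exact_mod_cast H m (by omega)
    show u m ≤ ((n:ℝ)-1)/n + ε
    rw [hu]
    simp only
    rw [div_le_iff₀ hm1pos, ← mul_le_mul_iff_right₀ hnpos]
    have expand : (n:ℝ) * ((((n:ℝ)-1)/n + ε)*((m:ℝ)-1))
        = ((n:ℝ)-1)*((m:ℝ)-1) + (n:ℝ)*(ε*((m:ℝ)-1)) := by
      field_simp
    rw [expand]
    have h4 := mul_le_mul_of_nonneg_left hεm hnpos.le
    linarith
  · rw [Real.sInf_of_not_bddBelow hbd]
    exact div_nonneg (by linarith) hnpos.le
end
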